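/- arXiv:1706.00364 — 6 statements merged into one kernel-verified Lean document; each statement's English description precedes it below -/
import Mathlib

section
/- Let X be a complete separable metric space and let P be a Markov transition kernel on X which is Feller, i.e. for every bounded continuous function f : X → ℝ the map x ↦ ∫ f(y) P(x,dy) is continuous. Suppose P admits a Lyapunov function, i.e. a Borel measurable function V : X → [0,∞] such that (i) V(x) < ∞ for at least one x, (ii) for every c ∈ [0,∞) the sublevel set {x : V(x) ≤ c} is compact, and (iii) there exist constants 0 ≤ γ < 1 and C ≥ 0 such that ∫ V(y) P(x,dy) ≤ γ·V(x) + C for every x with V(x) < ∞. Then P admits an invariant probability measure, i.e. a probability measure π on X with π(A) = ∫ P(x,A) π(dx) for every Borel set A. -/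
/-!
Krylov–Bogoliubov. Start the chain at a point `x₀` with `V x₀ < ∞`. The drift condition keeps
`∫ V d(δ_{x₀} Pᵏ)` below `V x₀ + C / (1 - γ)`, so by Markov's inequality and the compactness of the
sublevel sets of `V` the Cesàro averages `Aₙ = (n + 1)⁻¹ ∑_{k ≤ n} δ_{x₀} Pᵏ` are tight, and by
Prokhorov's theorem they have a weak cluster point `π`. Since `Aₙ P - Aₙ` has total mass `O(1/n)`
and, by the Feller property, `μ ↦ ∫ g d(μ P) = ∫ (P g) dμ` is weakly continuous for bounded
continuous `g`, the cluster point satisfies `π P = π`.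
-/

open MeasureTheory ProbabilityTheory Filter Topology Finset
open scoped NNReal ENNReal BoundedContinuousFunction

theorem NNReal.mul_div_one_sub_add {γ : ℝ≥0} (hγ : γ < 1) (C : ℝ≥0) :
    γ * (C / (1 - γ)) + C = C / (1 - γ) := by
  have h : (1 - γ : ℝ≥0) ≠ 0 := (tsub_pos_of_lt hγ).ne'
  rw [eq_div_iff h, add_mul, mul_assoc, div_mul_cancel₀ _ h, mul_tsub, mul_one, mul_comm γ C,
    add_tsub_cancel_of_le (mul_le_of_le_one_right zero_le hγ.le)]

theorem MapClusterPt.eq_of_tendsto {ι Y : Type*} [TopologicalSpace Y] [T2Space Y] {F : Filter ι}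
    {u : ι → Y} {x y : Y} (hx : MapClusterPt x F u) (hy : Tendsto u F (𝓝 y)) : x = y := by
  by_contra hne
  exact (ClusterPt.mono hx hy).neBot.ne ((disjoint_nhds_nhds.2 hne).eq_bot)

namespace MeasureTheory

theorem Measure.comp_finsetSum {α β ι : Type*} {_ : MeasurableSpace α} {_ : MeasurableSpace β}
    (κ : Kernel α β) (s : Finset ι) (μ : ι → Measure α) :
    κ ∘ₘ (∑ i ∈ s, μ i) = ∑ i ∈ s, κ ∘ₘ μ i := by
  induction s using Finset.cons_induction with
  | empty => simp
  | cons i s _ ih => rw [sum_cons, sum_cons, Measure.comp_add, ih]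

theorem Measure.integral_comp {α β E : Type*} {_ : MeasurableSpace α} {_ : MeasurableSpace β}
    [NormedAddCommGroup E] [NormedSpace ℝ E] {κ : Kernel α β} {μ : Measure α} {f : β → E}
    (hf : Integrable f (κ ∘ₘ μ)) : ∫ y, f y ∂(κ ∘ₘ μ) = ∫ x, ∫ y, f y ∂κ x ∂μ := by
  rw [Measure.comp_eq_comp_const_apply] at hf ⊢
  rw [Kernel.integral_comp hf, Kernel.const_apply]

theorem isTightMeasureSet_of_lintegral_le {X : Type*} [TopologicalSpace X] [MeasurableSpace X]
    {S : Set (Measure X)} {V : X → ℝ≥0∞} (hV : Measurable V)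
    (hVcompact : ∀ c : ℝ≥0, IsCompact {x | V x ≤ c}) {B : ℝ≥0∞} (hB : B ≠ ∞)
    (hS : ∀ μ ∈ S, ∫⁻ x, V x ∂μ ≤ B) : IsTightMeasureSet S := by
  rw [isTightMeasureSet_iff_exists_isCompact_measure_compl_le]
  intro ε hε
  obtain ⟨n, hn⟩ := ENNReal.exists_nat_mul_gt hε.ne' hB
  refine ⟨_, hVcompact n, fun μ hμ => ?_⟩
  have hmarkov : (n : ℝ≥0∞) * μ {x | n ≤ V x} < n * ε :=
    ((mul_meas_ge_le_lintegral₀ hV.aemeasurable _).trans (hS μ hμ)).trans_lt hn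
  calc μ {x | V x ≤ (n : ℝ≥0)}ᶜ ≤ μ {x | n ≤ V x} :=
        measure_mono fun x hx => by simpa using (not_le.1 (Set.notMem_ofPred_iff.1 hx)).le
    _ ≤ ε := (lt_of_mul_lt_mul_left' hmarkov).le

theorem ProbabilityMeasure.exists_mapClusterPt_of_isTightMeasureSet {E ι : Type*}
    [TopologicalSpace E] [T2Space E] [MeasurableSpace E] [BorelSpace E] {l : Filter ι} [l.NeBot]
    (u : ι → ProbabilityMeasure E) (hu : IsTightMeasureSet (Set.range fun i => (u i : Measure E))) :
    ∃ π, MapClusterPt π l u := by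
  have hcompact : IsCompact (closure (Set.range u)) :=
    isCompact_closure_of_isTightMeasureSet <| by
      simp only [Set.mem_range, exists_exists_eq_and]
      exact hu
  obtain ⟨π, -, hπ⟩ := hcompact.exists_mapClusterPt (f := l)
    (tendsto_principal.2 (Eventually.of_forall fun i => subset_closure (Set.mem_range_self i)))
  exact ⟨π, hπ⟩

end MeasureTheory

namespace ProbabilityTheory.Kernel

variable {X : Type*} [MeasurableSpace X] (P : Kernel X X)

instance isMarkovKernel_pow [IsMarkovKernel P] : ∀ k : ℕ, IsMarkovKernel (P ^ k)
  | 0 => by rw [pow_zero]; exact inferInstanceAs (IsMarkovKernel Kernel.id)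
  | k + 1 => by
    have := isMarkovKernel_pow k
    rw [pow_succ]
    exact inferInstanceAs (IsMarkovKernel ((P ^ k) ∘ₖ P))

theorem comp_pow_comp (ν : Measure X) (k : ℕ) : P ∘ₘ ((P ^ k) ∘ₘ ν) = (P ^ (k + 1)) ∘ₘ ν := by
  rw [Measure.comp_assoc, pow_succ']
  rfl

noncomputable def cesaroAverage (ν : Measure X) (n : ℕ) : Measure X :=
  ((n : ℝ≥0) + 1)⁻¹ • ∑ k ∈ range (n + 1), (P ^ k) ∘ₘ ν

theorem lintegral_cesaroAverage (ν : Measure X) (n : ℕ) (f : X → ℝ≥0∞) :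
    ∫⁻ x, f x ∂(P.cesaroAverage ν n)
      = ((n : ℝ≥0∞) + 1)⁻¹ * ∑ k ∈ range (n + 1), ∫⁻ x, f x ∂((P ^ k) ∘ₘ ν) := by
  rw [cesaroAverage, lintegral_smul_measure, lintegral_finsetSum_measure, ENNReal.smul_def,
    smul_eq_mul, ENNReal.coe_inv (by positivity)]
  push_cast
  rfl

instance isProbabilityMeasure_cesaroAverage [IsMarkovKernel P] (ν : Measure X)
    [IsProbabilityMeasure ν] (n : ℕ) :
    IsProbabilityMeasure (P.cesaroAverage ν n) := by
  constructor
  rw [← lintegral_one, lintegral_cesaroAverage]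
  simp only [lintegral_one, measure_univ]
  rw [Finset.sum_const, Finset.card_range, nsmul_one, Nat.cast_succ]
  exact ENNReal.inv_mul_cancel (by positivity) (by simp)

-- The telescoping identity `P A_n - A_n = (P^(n+1) ν - ν) / (n+1)`, written additively because
-- measures cannot be subtracted.
theorem comp_cesaroAverage_add (ν : Measure X) (n : ℕ) :
    P ∘ₘ P.cesaroAverage ν n + ((n : ℝ≥0) + 1)⁻¹ • ν
      = P.cesaroAverage ν n + ((n : ℝ≥0) + 1)⁻¹ • ((P ^ (n + 1)) ∘ₘ ν) := by
  have hshift : ∑ k ∈ range (n + 1), P ∘ₘ ((P ^ k) ∘ₘ ν) + ν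
      = ∑ k ∈ range (n + 1), (P ^ k) ∘ₘ ν + (P ^ (n + 1)) ∘ₘ ν := by
    simp only [comp_pow_comp]
    rw [← sum_range_succ (fun k => (P ^ k) ∘ₘ ν), sum_range_succ' (fun k => (P ^ k) ∘ₘ ν),
      pow_zero]
    exact congrArg _ Measure.id_comp.symm
  simp only [cesaroAverage, ← smul_add, ← hshift, ENNReal.smul_def, Measure.comp_smul,
    Measure.comp_finsetSum]

theorem lintegral_comp_le_of_drift {μ : Measure X} [IsProbabilityMeasure μ] {V : X → ℝ≥0∞}
    (hV : Measurable V) {γ C : ℝ≥0∞} (hdrift : ∀ x, V x < ∞ → ∫⁻ y, V y ∂P x ≤ γ * V x + C)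
    (hμV : ∫⁻ x, V x ∂μ ≠ ∞) : ∫⁻ x, V x ∂(P ∘ₘ μ) ≤ γ * ∫⁻ x, V x ∂μ + C :=
  calc ∫⁻ x, V x ∂(P ∘ₘ μ) = ∫⁻ x, ∫⁻ y, V y ∂P x ∂μ :=
        Measure.lintegral_bind P.aemeasurable hV.aemeasurable
    _ ≤ ∫⁻ x, (γ * V x + C) ∂μ := lintegral_mono_ae ((ae_lt_top hV hμV).mono hdrift)
    _ = γ * ∫⁻ x, V x ∂μ + C := by
        rw [lintegral_add_right _ measurable_const, lintegral_const_mul _ hV,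
          MeasureTheory.lintegral_const, measure_univ, mul_one]

variable [IsMarkovKernel P] {ν : Measure X} [IsProbabilityMeasure ν]

theorem lintegral_pow_comp_le {V : X → ℝ≥0∞} (hV : Measurable V) {γ C : ℝ≥0} (hγ : γ < 1)
    (hdrift : ∀ x, V x < ∞ → ∫⁻ y, V y ∂P x ≤ γ * V x + C) (hνV : ∫⁻ x, V x ∂ν ≠ ∞) (k : ℕ) :
    ∫⁻ x, V x ∂((P ^ k) ∘ₘ ν) ≤ ∫⁻ x, V x ∂ν + (C / (1 - γ) : ℝ≥0) := by
  induction k with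
  | zero => exact (congrArg (fun μ => ∫⁻ x, V x ∂μ) Measure.id_comp).trans_le le_self_add
  | succ k ih =>
    rw [← comp_pow_comp]
    calc ∫⁻ x, V x ∂(P ∘ₘ ((P ^ k) ∘ₘ ν)) ≤ γ * ∫⁻ x, V x ∂((P ^ k) ∘ₘ ν) + C :=
          lintegral_comp_le_of_drift P hV hdrift
            (ih.trans_lt (ENNReal.add_lt_top.2 ⟨hνV.lt_top, ENNReal.coe_lt_top⟩)).ne
      _ ≤ γ * (∫⁻ x, V x ∂ν + (C / (1 - γ) : ℝ≥0)) + C := by gcongr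
      _ ≤ ∫⁻ x, V x ∂ν + (C / (1 - γ) : ℝ≥0) := by
          rw [mul_add, add_assoc, ← ENNReal.coe_mul, ← ENNReal.coe_add,
            NNReal.mul_div_one_sub_add hγ]
          gcongr
          exact mul_le_of_le_one_left zero_le (by exact_mod_cast hγ.le)

theorem lintegral_cesaroAverage_le {V : X → ℝ≥0∞} (hV : Measurable V) {γ C : ℝ≥0} (hγ : γ < 1)
    (hdrift : ∀ x, V x < ∞ → ∫⁻ y, V y ∂P x ≤ γ * V x + C) (hνV : ∫⁻ x, V x ∂ν ≠ ∞) (n : ℕ) :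
    ∫⁻ x, V x ∂(P.cesaroAverage ν n) ≤ ∫⁻ x, V x ∂ν + (C / (1 - γ) : ℝ≥0) := by
  rw [lintegral_cesaroAverage]
  calc ((n : ℝ≥0∞) + 1)⁻¹ * ∑ k ∈ range (n + 1), ∫⁻ x, V x ∂((P ^ k) ∘ₘ ν)
      ≤ ((n : ℝ≥0∞) + 1)⁻¹ * (((n : ℝ≥0∞) + 1) * (∫⁻ x, V x ∂ν + (C / (1 - γ) : ℝ≥0))) := by
        gcongr
        refine (Finset.sum_le_card_nsmul _ _ _ fun k _ =>
          P.lintegral_pow_comp_le hV hγ hdrift hνV k).trans_eq ?_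
        rw [card_range, nsmul_eq_mul, Nat.cast_succ]
    _ = ∫⁻ x, V x ∂ν + (C / (1 - γ) : ℝ≥0) :=
        ENNReal.inv_mul_cancel_left (by positivity) (by simp)

section Feller

variable [TopologicalSpace X]

def IsFeller {Y : Type*} [MeasurableSpace Y] [TopologicalSpace Y] (P : Kernel X Y) : Prop :=
  ∀ g : Y →ᵇ ℝ, Continuous fun x => ∫ y, g y ∂P x

theorem norm_integral_comp_cesaroAverage_sub_le [OpensMeasurableSpace X] (g : X →ᵇ ℝ) (n : ℕ) :
    ‖∫ x, g x ∂(P ∘ₘ P.cesaroAverage ν n) - ∫ x, g x ∂(P.cesaroAverage ν n)‖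
      ≤ 2 * ‖g‖ / (n + 1) := by
  have hsum := congrArg (fun μ => ∫ x, g x ∂μ) (P.comp_cesaroAverage_add ν n)
  simp only [integral_add_measure (g.integrable _) (g.integrable _),
    integral_smul_nnreal_measure, NNReal.smul_def, smul_eq_mul] at hsum
  push_cast at hsum
  have hdiff : ∫ x, g x ∂(P ∘ₘ P.cesaroAverage ν n) - ∫ x, g x ∂(P.cesaroAverage ν n)
      = ((n : ℝ) + 1)⁻¹ * (∫ x, g x ∂((P ^ (n + 1)) ∘ₘ ν) - ∫ x, g x ∂ν) := by
    rw [mul_sub]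
    linarith
  calc ‖∫ x, g x ∂(P ∘ₘ P.cesaroAverage ν n) - ∫ x, g x ∂(P.cesaroAverage ν n)‖
      = ((n : ℝ) + 1)⁻¹ * ‖∫ x, g x ∂((P ^ (n + 1)) ∘ₘ ν) - ∫ x, g x ∂ν‖ := by
        rw [hdiff, norm_mul, Real.norm_of_nonneg (by positivity)]
    _ ≤ ((n : ℝ) + 1)⁻¹ * (‖g‖ + ‖g‖) := by
        gcongr
        exact (norm_sub_le _ _).trans
          (add_le_add (g.norm_integral_le_norm _) (g.norm_integral_le_norm _))
    _ = 2 * ‖g‖ / (n + 1) := by ring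

theorem tendsto_integral_comp_cesaroAverage_sub [OpensMeasurableSpace X] (g : X →ᵇ ℝ) :
    Tendsto (fun n => ∫ x, g x ∂(P ∘ₘ P.cesaroAverage ν n) - ∫ x, g x ∂(P.cesaroAverage ν n))
      atTop (𝓝 0) := by
  refine squeeze_zero_norm (P.norm_integral_comp_cesaroAverage_sub_le g) ?_
  simpa only [mul_one_div, mul_zero] using
    (tendsto_one_div_add_atTop_nhds_zero_nat (𝕜 := ℝ)).const_mul (2 * ‖g‖)

variable {P} in
theorem IsFeller.comp_eq_of_mapClusterPt [HasOuterApproxClosed X] [BorelSpace X]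
    (hP : P.IsFeller) {π : ProbabilityMeasure X}
    (hπ : MapClusterPt π atTop
      fun n => (⟨P.cesaroAverage ν n, inferInstance⟩ : ProbabilityMeasure X)) :
    P ∘ₘ (π : Measure X) = π := by
  refine ext_of_forall_integral_eq_of_IsFiniteMeasure fun g => ?_
  let Pg : X →ᵇ ℝ := .ofNormedAddCommGroup (fun x => ∫ y, g y ∂P x) (hP g) ‖g‖
    fun x => g.norm_integral_le_norm (P x)
  have hPg (μ : Measure X) [IsFiniteMeasure μ] : ∫ x, Pg x ∂μ = ∫ y, g y ∂(P ∘ₘ μ) :=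
    (Measure.integral_comp (g.integrable _)).symm
  let F : ProbabilityMeasure X → ℝ := fun μ => ∫ x, Pg x ∂μ - ∫ x, g x ∂μ
  have hF : Continuous F :=
    (ProbabilityMeasure.continuous_integral_boundedContinuousFunction Pg).sub
      (ProbabilityMeasure.continuous_integral_boundedContinuousFunction g)
  have hFπ : F π = 0 := (hπ.continuousAt_comp hF.continuousAt).eq_of_tendsto <| by
    simp only [F, hPg]
    exact P.tendsto_integral_comp_cesaroAverage_sub g
  rw [← hPg]
  exact sub_eq_zero.1 hFπ

end Feller

end ProbabilityTheory.Kernel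

theorem feller_lyapunov_has_invariant_measure_general
    {X : Type*} [MetricSpace X] [MeasurableSpace X] [BorelSpace X]
    (P : Kernel X X) [IsMarkovKernel P]
    (hFeller : ∀ f : X → ℝ, Continuous f → (∃ M : ℝ, ∀ x, |f x| ≤ M) →
      Continuous (fun x => ∫ y, f y ∂(P x)))
    (V : X → ℝ≥0∞) (hVmeas : Measurable V)
    (hVfin : ∃ x, V x < ⊤)
    (hVcompact : ∀ c : ℝ≥0, IsCompact {x | V x ≤ (c : ℝ≥0∞)})
    (γ C : ℝ≥0) (hγ : γ < 1)
    (hdrift : ∀ x, V x < ⊤ → ∫⁻ y, V y ∂(P x) ≤ (γ : ℝ≥0∞) * V x + C) :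
    ∃ π : Measure X, IsProbabilityMeasure π ∧
      ∀ A : Set X, MeasurableSet A → π A = ∫⁻ x, P x A ∂π := by
  obtain ⟨x₀, hx₀⟩ := hVfin
  have hP : P.IsFeller := fun g => hFeller g g.continuous ⟨‖g‖, g.norm_coe_le_norm⟩
  let μ (n : ℕ) : ProbabilityMeasure X := ⟨P.cesaroAverage (.dirac x₀) n, inferInstance⟩
  have htight : IsTightMeasureSet (Set.range fun n => (μ n : Measure X)) := by
    refine isTightMeasureSet_of_lintegral_le (B := V x₀ + (C / (1 - γ) : ℝ≥0)) hVmeas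
      hVcompact (ENNReal.add_lt_top.2 ⟨hx₀, ENNReal.coe_lt_top⟩).ne ?_
    rintro _ ⟨n, rfl⟩
    have hbound := P.lintegral_cesaroAverage_le (ν := .dirac x₀) hVmeas hγ hdrift
      (by rw [lintegral_dirac]; exact hx₀.ne) n
    rwa [lintegral_dirac] at hbound
  obtain ⟨π, hπ⟩ :=
    ProbabilityMeasure.exists_mapClusterPt_of_isTightMeasureSet (l := atTop) μ htight
  refine ⟨π, inferInstance, fun A hA => ?_⟩
  conv_lhs => rw [← hP.comp_eq_of_mapClusterPt hπ]
  exact Measure.bind_apply hA P.aemeasurable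

/-- If a Feller Markov transition kernel on a complete separable metric space admits a
Lyapunov function, then it admits an invariant probability measure. -/
theorem feller_lyapunov_has_invariant_measure
    {X : Type*} [MetricSpace X] [CompleteSpace X] [TopologicalSpace.SeparableSpace X]
    [MeasurableSpace X] [BorelSpace X]
    (P : Kernel X X) [IsMarkovKernel P]
    (hFeller : ∀ f : X → ℝ, Continuous f → (∃ M : ℝ, ∀ x, |f x| ≤ M) →
      Continuous (fun x => ∫ y, f y ∂(P x)))
    (V : X → ℝ≥0∞) (hVmeas : Measurable V)
    (hVfin : ∃ x, V x < ⊤)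
    (hVcompact : ∀ c : ℝ≥0, IsCompact {x | V x ≤ (c : ℝ≥0∞)})
    (γ C : ℝ≥0) (hγ : γ < 1)
    (hdrift : ∀ x, V x < ⊤ → ∫⁻ y, V y ∂(P x) ≤ (γ : ℝ≥0∞) * V x + C) :
    ∃ π : Measure X, IsProbabilityMeasure π ∧
      ∀ A : Set X, MeasurableSet A → π A = ∫⁻ x, P x A ∂π :=
  feller_lyapunov_has_invariant_measure_general P hFeller V hVmeas hVfin hVcompact γ C hγ hdrift
end

section
/- Let α > 0, β > 0 with α ≠ β. Define the measure π on [0,∞) × {0,1} by π(ds, 0) = (β/(α+β)) · (αβ/(α−β)) (e^{−βs} − e^{−αs}) ds and π(ds, 1) = (α/(α+β)) · β e^{−βs} ds, where ds is Lebesgue measure on [0,∞). Then π is a probability measure, and for every function f : [0,∞) × {0,1} → ℝ that is bounded, continuously differentiable in the first variable with bounded derivative ∂_s f, one has ∫ [ β·1_{v=1}·(f(s,0) − f(s,1)) + α·1_{v=0}·(f(0,1) − f(s,0)) + ∂_s f(s,v) ] π(ds,dv) = 0. -/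
/-
The densities `p₀, p₁` of `π` solve the stationary forward equations of the process,
`p₀' = β p₁ - α p₀` and `p₁' = -β p₁`, with boundary values `p₀ 0 = 0` (no mass enters state `0`
at age `0`) and `p₁ 0 = α ∫ p₀` (the flux of resets). Integrating by parts on `(0, ∞)` moves
`∂ₛ` from `f` onto the densities; the jump terms then cancel against the transport terms, and the
only surviving boundary contributions, `α f(0,1) ∫ p₀` and `-p₁ 0 · f(0,1)`, cancel by the
boundary condition.
-/

open MeasureTheory
open scoped ENNReal

open Set Filter Topology

section DensityMeasures

variable {Y X : Type*} [MeasurableSpace Y] [MeasurableSpace X] {μ : Measure Y} {p : Y → ℝ}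
  {e : Y → X}

lemma integral_map_withDensity_ofReal (hp : Measurable p) (hp₀ : 0 ≤ᵐ[μ] p) (he : Measurable e)
    {F : X → ℝ} (hF : Measurable F) :
    ∫ x, F x ∂(μ.withDensity fun y => ENNReal.ofReal (p y)).map e = ∫ y, p y * F (e y) ∂μ := by
  rw [integral_map he.aemeasurable hF.aestronglyMeasurable,
    integral_withDensity_eq_integral_toReal_smul hp.ennreal_ofReal
      (ae_of_all _ fun _ => ENNReal.ofReal_lt_top)]
  refine integral_congr_ae (hp₀.mono fun y hy => ?_)
  simp [ENNReal.toReal_ofReal hy]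

lemma map_withDensity_ofReal_apply_univ (hp₀ : 0 ≤ᵐ[μ] p) (hpi : Integrable p μ)
    (he : Measurable e) :
    (μ.withDensity fun y => ENNReal.ofReal (p y)).map e univ = ENNReal.ofReal (∫ y, p y ∂μ) := by
  rw [Measure.map_apply he MeasurableSet.univ, preimage_univ,
    withDensity_apply _ MeasurableSet.univ, Measure.restrict_univ,
    ofReal_integral_eq_lintegral_ofReal hpi hp₀]

lemma ae_nonneg_restrict_Ici {μ : Measure ℝ} {p : ℝ → ℝ} (hp : ∀ s, 0 ≤ s → 0 ≤ p s) :
    0 ≤ᵐ[μ.restrict (Ici 0)] p :=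
  (ae_restrict_iff' measurableSet_Ici).2 (ae_of_all _ hp)

end DensityMeasures

namespace TwoStateProcess

variable {α β M : ℝ} {p p' p₀ p₁ g g' h : ℝ → ℝ}

noncomputable def densityMeasure (p₀ p₁ : ℝ → ℝ) : Measure (ℝ × Bool) :=
  ((volume.restrict (Ici (0 : ℝ))).withDensity fun s => ENNReal.ofReal (p₀ s)).map
      (fun s => (s, false))
    + ((volume.restrict (Ici (0 : ℝ))).withDensity fun s => ENNReal.ofReal (p₁ s)).map
      (fun s => (s, true))

lemma densityMeasure_apply_univ (hp₀ : ∀ s, 0 ≤ s → 0 ≤ p₀ s) (hp₁ : ∀ s, 0 ≤ s → 0 ≤ p₁ s)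
    (hp₀i : IntegrableOn p₀ (Ioi 0)) (hp₁i : IntegrableOn p₁ (Ioi 0)) :
    densityMeasure p₀ p₁ univ
      = ENNReal.ofReal (∫ s in Ioi 0, p₀ s) + ENNReal.ofReal (∫ s in Ioi 0, p₁ s) := by
  rw [densityMeasure, Measure.add_apply,
    map_withDensity_ofReal_apply_univ (ae_nonneg_restrict_Ici hp₀)
      ((integrableOn_Ici_iff_integrableOn_Ioi).2 hp₀i) measurable_prodMk_right,
    map_withDensity_ofReal_apply_univ (ae_nonneg_restrict_Ici hp₁)
      ((integrableOn_Ici_iff_integrableOn_Ioi).2 hp₁i) measurable_prodMk_right,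
    integral_Ici_eq_integral_Ioi, integral_Ici_eq_integral_Ioi]

lemma integral_densityMeasure (hp₀ : ∀ s, 0 ≤ s → 0 ≤ p₀ s) (hp₁ : ∀ s, 0 ≤ s → 0 ≤ p₁ s)
    (hp₀m : Measurable p₀) (hp₁m : Measurable p₁) {F : ℝ × Bool → ℝ}
    (hF : Measurable F) (hFi : Integrable F (densityMeasure p₀ p₁)) :
    ∫ x, F x ∂densityMeasure p₀ p₁
      = (∫ s in Ioi 0, p₀ s * F (s, false)) + ∫ s in Ioi 0, p₁ s * F (s, true) := by
  rw [densityMeasure, integrable_add_measure] at hFi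
  rw [densityMeasure, integral_add_measure hFi.1 hFi.2,
    integral_map_withDensity_ofReal hp₀m (ae_nonneg_restrict_Ici hp₀)
      measurable_prodMk_right hF,
    integral_map_withDensity_ofReal hp₁m (ae_nonneg_restrict_Ici hp₁)
      measurable_prodMk_right hF,
    integral_Ici_eq_integral_Ioi, integral_Ici_eq_integral_Ioi]

lemma integral_Ioi_mul_deriv_of_bounded (hp : ∀ s, HasDerivAt p (p' s) s)
    (hpi : IntegrableOn p (Ioi 0)) (hp'i : IntegrableOn p' (Ioi 0))
    (hp_top : Tendsto p atTop (𝓝 0)) (hg : ∀ s, HasDerivAt g (g' s) s) (hg' : Continuous g')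
    (hgM : ∀ s, |g s| ≤ M) (hg'M : ∀ s, |g' s| ≤ M) :
    ∫ s in Ioi 0, p s * g' s = -(p 0 * g 0) - ∫ s in Ioi 0, p' s * g s := by
  have hgc : Continuous g := Differentiable.continuous fun s => (hg s).differentiableAt
  have h_zero : Tendsto (p * g) (𝓝[>] 0) (𝓝 (p 0 * g 0)) :=
    ((hp 0).continuousAt.mul (hg 0).continuousAt).tendsto.mono_left nhdsWithin_le_nhds
  have h_infty : Tendsto (p * g) atTop (𝓝 0) :=
    hp_top.zero_mul_isBoundedUnder_le (isBoundedUnder_of ⟨M, hgM⟩)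
  simpa [zero_sub] using integral_Ioi_mul_deriv_eq_deriv_mul (fun s _ => hp s) (fun s _ => hg s)
    (hpi.mul_bdd hg'.aestronglyMeasurable (ae_of_all _ hg'M))
    (hp'i.mul_bdd hgc.aestronglyMeasurable (ae_of_all _ hgM)) h_zero h_infty

lemma integral_mul_jump_add_deriv_of_forward₀ (hp₀ : ∀ s, HasDerivAt p₀ (β * p₁ s - α * p₀ s) s)
    (hp₀_zero : p₀ 0 = 0) (hp₀i : IntegrableOn p₀ (Ioi 0)) (hp₁i : IntegrableOn p₁ (Ioi 0))
    (hp₀_top : Tendsto p₀ atTop (𝓝 0)) (hg : ∀ s, HasDerivAt g (g' s) s) (hg' : Continuous g')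
    (hgM : ∀ s, |g s| ≤ M) (hg'M : ∀ s, |g' s| ≤ M) (c : ℝ) :
    ∫ s in Ioi 0, p₀ s * (α * (c - g s) + g' s)
      = α * c * (∫ s in Ioi 0, p₀ s) - β * ∫ s in Ioi 0, p₁ s * g s := by
  have hgc : Continuous g := Differentiable.continuous fun s => (hg s).differentiableAt
  have hp₀g := hp₀i.mul_bdd hgc.aestronglyMeasurable (ae_of_all _ hgM)
  have hp₁g := hp₁i.mul_bdd hgc.aestronglyMeasurable (ae_of_all _ hgM)
  have hp₀g' := hp₀i.mul_bdd hg'.aestronglyMeasurable (ae_of_all _ hg'M)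
  have hparts := integral_Ioi_mul_deriv_of_bounded hp₀ hp₀i
    ((hp₁i.const_mul β).sub (hp₀i.const_mul α)) hp₀_top hg hg' hgM hg'M
  simp only [sub_mul, mul_assoc] at hparts
  rw [integral_sub (hp₁g.const_mul β) (hp₀g.const_mul α), integral_const_mul, integral_const_mul,
    hp₀_zero, zero_mul] at hparts
  calc ∫ s in Ioi 0, p₀ s * (α * (c - g s) + g' s)
      = ∫ s in Ioi 0, (α * c * p₀ s - α * (p₀ s * g s) + p₀ s * g' s) := by
        congr 1; ext s; ring
    _ = α * c * (∫ s in Ioi 0, p₀ s) - β * ∫ s in Ioi 0, p₁ s * g s := by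
        rw [integral_add ((hp₀i.const_mul _).sub' (hp₀g.const_mul α)) hp₀g',
          integral_sub (hp₀i.const_mul _) (hp₀g.const_mul α), integral_const_mul,
          integral_const_mul, hparts]
        ring

lemma integral_mul_jump_add_deriv_of_forward₁ (hp₁ : ∀ s, HasDerivAt p₁ (-β * p₁ s) s)
    (hp₁i : IntegrableOn p₁ (Ioi 0)) (hp₁_top : Tendsto p₁ atTop (𝓝 0))
    (hg : ∀ s, HasDerivAt g (g' s) s) (hg' : Continuous g') (hh : Continuous h)
    (hgM : ∀ s, |g s| ≤ M) (hg'M : ∀ s, |g' s| ≤ M) (hhM : ∀ s, |h s| ≤ M) :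
    ∫ s in Ioi 0, p₁ s * (β * (h s - g s) + g' s)
      = β * (∫ s in Ioi 0, p₁ s * h s) - p₁ 0 * g 0 := by
  have hgc : Continuous g := Differentiable.continuous fun s => (hg s).differentiableAt
  have hp₁g := hp₁i.mul_bdd hgc.aestronglyMeasurable (ae_of_all _ hgM)
  have hp₁h := hp₁i.mul_bdd hh.aestronglyMeasurable (ae_of_all _ hhM)
  have hp₁g' := hp₁i.mul_bdd hg'.aestronglyMeasurable (ae_of_all _ hg'M)
  have hparts := integral_Ioi_mul_deriv_of_bounded hp₁ hp₁i (hp₁i.const_mul (-β)) hp₁_top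
    hg hg' hgM hg'M
  simp only [mul_assoc] at hparts
  rw [integral_const_mul] at hparts
  calc ∫ s in Ioi 0, p₁ s * (β * (h s - g s) + g' s)
      = ∫ s in Ioi 0, (β * (p₁ s * h s) - β * (p₁ s * g s) + p₁ s * g' s) := by
        congr 1; ext s; ring
    _ = β * (∫ s in Ioi 0, p₁ s * h s) - p₁ 0 * g 0 := by
        rw [integral_add ((hp₁h.const_mul β).sub' (hp₁g.const_mul β)) hp₁g',
          integral_sub (hp₁h.const_mul β) (hp₁g.const_mul β), integral_const_mul,
          integral_const_mul, hparts]
        ring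

/-- `f'` stands for `∂ₛ f`, and `true` encodes `v = 1`. -/
def generator (α β : ℝ) (f f' : ℝ → Bool → ℝ) (p : ℝ × Bool) : ℝ :=
  β * (if p.2 then (1 : ℝ) else 0) * (f p.1 false - f p.1 true)
    + α * (if p.2 then (0 : ℝ) else 1) * (f 0 true - f p.1 false) + f' p.1 p.2

variable {f f' : ℝ → Bool → ℝ}

@[simp]
lemma generator_false (s : ℝ) :
    generator α β f f' (s, false) = α * (f 0 true - f s false) + f' s false := by
  simp [generator]

@[simp]
lemma generator_true (s : ℝ) :
    generator α β f f' (s, true) = β * (f s false - f s true) + f' s true := by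
  simp [generator]

lemma measurable_generator (hf : ∀ v s, HasDerivAt (fun u => f u v) (f' s v) s)
    (hf' : ∀ v, Continuous fun s => f' s v) : Measurable (generator α β f f') := by
  have hfc : ∀ v, Continuous fun s => f s v :=
    fun v => Differentiable.continuous fun s => (hf v s).differentiableAt
  refine measurable_from_prod_countable_left fun v => ?_
  cases v
  · simp only [generator_false]
    exact ((continuous_const.mul (continuous_const.sub (hfc false))).add (hf' false)).measurable
  · simp only [generator_true]
    exact ((continuous_const.mul ((hfc false).sub (hfc true))).add (hf' true)).measurable

lemma abs_generator_le (hM : ∀ s v, |f s v| ≤ M ∧ |f' s v| ≤ M) (hα : 0 ≤ α) (hβ : 0 ≤ β)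
    (p : ℝ × Bool) :
    |generator α β f f' p| ≤ (2 * α + 2 * β + 1) * M := by
  have hM₀ : 0 ≤ M := (abs_nonneg _).trans (hM 0 true).1
  have jump_le : ∀ {a : ℝ}, 0 ≤ a → ∀ s t v w, |a * (f s v - f t w)| ≤ a * (2 * M) :=
    fun {a} ha s t v w => by
      rw [abs_mul, abs_of_nonneg ha, two_mul]
      exact mul_le_mul_of_nonneg_left
        ((abs_sub _ _).trans (add_le_add (hM s v).1 (hM t w).1)) ha
  obtain ⟨s, _ | _⟩ := p
  · calc |generator α β f f' (s, false)|
        ≤ |α * (f 0 true - f s false)| + |f' s false| := by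
          rw [generator_false]; exact abs_add_le _ _
      _ ≤ α * (2 * M) + M := add_le_add (jump_le hα _ _ _ _) (hM s false).2
      _ ≤ (2 * α + 2 * β + 1) * M := by nlinarith
  · calc |generator α β f f' (s, true)|
        ≤ |β * (f s false - f s true)| + |f' s true| := by
          rw [generator_true]; exact abs_add_le _ _
      _ ≤ β * (2 * M) + M := add_le_add (jump_le hβ _ _ _ _) (hM s true).2
      _ ≤ (2 * α + 2 * β + 1) * M := by nlinarith

theorem integral_generator_eq_zero_of_forward
    (hp₀ : ∀ s, HasDerivAt p₀ (β * p₁ s - α * p₀ s) s) (hp₁ : ∀ s, HasDerivAt p₁ (-β * p₁ s) s)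
    (hp₀_zero : p₀ 0 = 0) (hp₁_zero : p₁ 0 = α * ∫ s in Ioi 0, p₀ s)
    (hp₀i : IntegrableOn p₀ (Ioi 0)) (hp₁i : IntegrableOn p₁ (Ioi 0))
    (hp₀_top : Tendsto p₀ atTop (𝓝 0)) (hp₁_top : Tendsto p₁ atTop (𝓝 0))
    (hf : ∀ v s, HasDerivAt (fun u => f u v) (f' s v) s) (hf' : ∀ v, Continuous fun s => f' s v)
    (hM : ∀ s v, |f s v| ≤ M ∧ |f' s v| ≤ M) :
    (∫ s in Ioi 0, p₀ s * generator α β f f' (s, false))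
      + ∫ s in Ioi 0, p₁ s * generator α β f f' (s, true) = 0 := by
  simp only [generator_false, generator_true]
  rw [integral_mul_jump_add_deriv_of_forward₀ hp₀ hp₀_zero hp₀i hp₁i hp₀_top (hf false) (hf' false)
      (fun s => (hM s false).1) (fun s => (hM s false).2),
    integral_mul_jump_add_deriv_of_forward₁ hp₁ hp₁i hp₁_top (hf true) (hf' true)
      (Differentiable.continuous fun s => (hf false s).differentiableAt)
      (fun s => (hM s true).1) (fun s => (hM s true).2) (fun s => (hM s false).1),
    hp₁_zero]
  ring

section Densities

open Real

noncomputable def density₀ (α β s : ℝ) : ℝ :=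
  β / (α + β) * (α * β / (α - β)) * (exp (-β * s) - exp (-α * s))

noncomputable def density₁ (α β s : ℝ) : ℝ :=
  α / (α + β) * (β * exp (-β * s))

lemma hasDerivAt_exp_neg_mul (b s : ℝ) :
    HasDerivAt (fun s => exp (-b * s)) (-b * exp (-b * s)) s := by
  simpa [mul_comm] using ((hasDerivAt_id s).const_mul (-b)).exp

lemma tendsto_exp_neg_mul_atTop {b : ℝ} (hb : 0 < b) :
    Tendsto (fun s => exp (-b * s)) atTop (𝓝 0) :=
  tendsto_exp_atBot.comp (tendsto_id.const_mul_atTop_of_neg (neg_neg_of_pos hb))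

lemma integrableOn_exp_neg_mul_Ioi {b : ℝ} (hb : 0 < b) :
    IntegrableOn (fun s => exp (-b * s)) (Ioi 0) :=
  integrableOn_exp_mul_Ioi (neg_neg_of_pos hb) 0

lemma integral_exp_neg_mul_Ioi {b : ℝ} (hb : 0 < b) :
    ∫ s in Ioi 0, exp (-b * s) = 1 / b := by
  rw [integral_exp_mul_Ioi (neg_neg_of_pos hb), mul_zero, exp_zero, div_neg, neg_div, neg_neg]

lemma hasDerivAt_density₀ (hαβ : α ≠ β) (s : ℝ) :
    HasDerivAt (density₀ α β) (β * density₁ α β s - α * density₀ α β s) s := by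
  have hαβ' : α - β ≠ 0 := sub_ne_zero.2 hαβ
  refine (((hasDerivAt_exp_neg_mul β s).sub (hasDerivAt_exp_neg_mul α s)).const_mul
    (β / (α + β) * (α * β / (α - β)))).congr_deriv ?_
  simp only [density₀, density₁]
  field_simp
  ring

lemma hasDerivAt_density₁ (s : ℝ) : HasDerivAt (density₁ α β) (-β * density₁ α β s) s := by
  refine (((hasDerivAt_exp_neg_mul β s).const_mul β).const_mul (α / (α + β))).congr_deriv ?_
  simp only [density₁]
  ring

lemma continuous_density₀ (α β : ℝ) : Continuous (density₀ α β) := by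
  unfold density₀; fun_prop

lemma continuous_density₁ (α β : ℝ) : Continuous (density₁ α β) := by
  unfold density₁; fun_prop

lemma density₀_zero : density₀ α β 0 = 0 := by
  simp [density₀]

lemma density₀_nonneg (hα : 0 < α) (hβ : 0 < β) {s : ℝ} (hs : 0 ≤ s) : 0 ≤ density₀ α β s := by
  have hmono : ∀ {a b : ℝ}, a ≤ b → exp (-b * s) ≤ exp (-a * s) := fun h =>
    exp_le_exp.2 (by nlinarith)
  have hquot : 0 ≤ (exp (-β * s) - exp (-α * s)) / (α - β) := by
    rcases le_total α β with h | h
    · exact div_nonneg_of_nonpos (sub_nonpos.2 (hmono h)) (sub_nonpos.2 h)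
    · exact div_nonneg (sub_nonneg.2 (hmono h)) (sub_nonneg.2 h)
  calc 0 ≤ β / (α + β) * (α * β) * ((exp (-β * s) - exp (-α * s)) / (α - β)) := by positivity
    _ = density₀ α β s := by rw [density₀]; ring

lemma density₁_nonneg (hα : 0 < α) (hβ : 0 < β) (s : ℝ) : 0 ≤ density₁ α β s := by
  unfold density₁; positivity

lemma integrableOn_density₀ (hα : 0 < α) (hβ : 0 < β) : IntegrableOn (density₀ α β) (Ioi 0) :=
  ((integrableOn_exp_neg_mul_Ioi hβ).sub' (integrableOn_exp_neg_mul_Ioi hα)).const_mul _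

lemma integrableOn_density₁ (hβ : 0 < β) : IntegrableOn (density₁ α β) (Ioi 0) :=
  ((integrableOn_exp_neg_mul_Ioi hβ).const_mul β).const_mul _

lemma tendsto_density₀ (hα : 0 < α) (hβ : 0 < β) : Tendsto (density₀ α β) atTop (𝓝 0) := by
  unfold density₀
  simpa using ((tendsto_exp_neg_mul_atTop hβ).sub (tendsto_exp_neg_mul_atTop hα)).const_mul
    (β / (α + β) * (α * β / (α - β)))

lemma tendsto_density₁ (hβ : 0 < β) : Tendsto (density₁ α β) atTop (𝓝 0) := by
  unfold density₁
  simpa using ((tendsto_exp_neg_mul_atTop hβ).const_mul β).const_mul (α / (α + β))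

lemma integral_density₀ (hα : 0 < α) (hβ : 0 < β) (hαβ : α ≠ β) :
    ∫ s in Ioi 0, density₀ α β s = β / (α + β) := by
  have hαβ' : α - β ≠ 0 := sub_ne_zero.2 hαβ
  simp only [density₀]
  rw [integral_const_mul, integral_sub (integrableOn_exp_neg_mul_Ioi hβ)
    (integrableOn_exp_neg_mul_Ioi hα), integral_exp_neg_mul_Ioi hβ, integral_exp_neg_mul_Ioi hα]
  field_simp

lemma integral_density₁ (hβ : 0 < β) : ∫ s in Ioi 0, density₁ α β s = α / (α + β) := by
  simp only [density₁]
  rw [integral_const_mul, integral_const_mul, integral_exp_neg_mul_Ioi hβ]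
  field_simp

lemma density₁_zero_eq_mul_integral_density₀ (hα : 0 < α) (hβ : 0 < β) (hαβ : α ≠ β) :
    density₁ α β 0 = α * ∫ s in Ioi 0, density₀ α β s := by
  rw [integral_density₀ hα hβ hαβ, density₁, mul_zero, exp_zero]
  ring

end Densities

end TwoStateProcess

open TwoStateProcess in
/-- The measure `π` on `[0,∞) × {0,1}` with densities
`π(ds,0) = (β/(α+β))·(αβ/(α−β))(e^{−βs} − e^{−αs}) ds` and
`π(ds,1) = (α/(α+β))·β e^{−βs} ds` is a probability measure, and it is invariant for the
two-state piecewise deterministic process: `∫ A f dπ = 0` for every bounded `C¹` (in `s`,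
with bounded derivative) function `f`, where `A` is the generator. -/
theorem invariant_measure_two_state_process
    (α β : ℝ) (hα : 0 < α) (hβ : 0 < β) (hαβ : α ≠ β)
    (π : Measure (ℝ × Bool))
    (hπ : π =
      ((volume.restrict (Set.Ici (0 : ℝ))).withDensity
          (fun s => ENNReal.ofReal
            ((β / (α + β)) * (α * β / (α - β)) * (Real.exp (-β * s) - Real.exp (-α * s))))).map
        (fun s => (s, false))
      +
      ((volume.restrict (Set.Ici (0 : ℝ))).withDensity
          (fun s => ENNReal.ofReal
            ((α / (α + β)) * (β * Real.exp (-β * s))))).map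
        (fun s => (s, true))) :
    IsProbabilityMeasure π ∧
    ∀ f f' : ℝ → Bool → ℝ,
      (∀ v s, HasDerivAt (fun u => f u v) (f' s v) s) →
      (∀ v, Continuous (fun s => f' s v)) →
      (∃ M : ℝ, ∀ s v, |f s v| ≤ M ∧ |f' s v| ≤ M) →
      ∫ p : ℝ × Bool,
          (β * (if p.2 then (1 : ℝ) else 0) * (f p.1 false - f p.1 true)
            + α * (if p.2 then (0 : ℝ) else 1) * (f 0 true - f p.1 false)
            + f' p.1 p.2) ∂π = 0 := by
  replace hπ : π = densityMeasure (density₀ α β) (density₁ α β) := hπ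
  have hp₀ : ∀ s, 0 ≤ s → 0 ≤ density₀ α β s := fun s => density₀_nonneg hα hβ
  have hp₁ : ∀ s, 0 ≤ s → 0 ≤ density₁ α β s := fun s _ => density₁_nonneg hα hβ s
  have hprob : IsProbabilityMeasure π := by
    constructor
    rw [hπ, densityMeasure_apply_univ hp₀ hp₁ (integrableOn_density₀ hα hβ)
      (integrableOn_density₁ hβ), integral_density₀ hα hβ hαβ, integral_density₁ hβ,
      ← ENNReal.ofReal_add (by positivity) (by positivity), ← add_div, add_comm,
      div_self (by positivity), ENNReal.ofReal_one]
  refine ⟨hprob, fun f f' hf hf' ⟨M, hM⟩ => ?_⟩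
  have hmeas := measurable_generator (α := α) (β := β) hf hf'
  have hint : Integrable (generator α β f f') π := .of_bound hmeas.aestronglyMeasurable _
    (ae_of_all _ fun p => (Real.norm_eq_abs _).trans_le (abs_generator_le hM hα.le hβ.le p))
  change ∫ p, generator α β f f' p ∂π = 0
  rw [hπ] at hint ⊢
  rw [integral_densityMeasure hp₀ hp₁ (continuous_density₀ α β).measurable
    (continuous_density₁ α β).measurable hmeas hint]
  exact integral_generator_eq_zero_of_forward (hasDerivAt_density₀ hαβ) hasDerivAt_density₁
    density₀_zero (density₁_zero_eq_mul_integral_density₀ hα hβ hαβ) (integrableOn_density₀ hα hβ)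
    (integrableOn_density₁ hβ) (tendsto_density₀ hα hβ) (tendsto_density₁ hβ) hf hf' hM
end

section
/- Let β > 0, 0 < α_m ≤ α_M with α_m ≠ β and α_M ≠ β, let A_+, A_- ∈ (0,1], and let τ_+, τ_- > 0. For α > 0 with α ≠ β and τ > 0 set X(α,τ) := (α²/(τβ+1) − β²/(τα+1))/(α² − β²). Then the inequality A_+ · (α_M/(α_m+β)) · (1 − X(α_M, τ_+)) < A_- · (α_m/(α_M+β)) · (1 − X(α_m, τ_-)) holds if and only if (α_M² A_+ τ_+ (α_M τ_+ + β τ_+ + 1)(τ_- α_m + 1)(τ_- β + 1)) / (α_m² A_- τ_- (α_m τ_- + β τ_- + 1)(τ_+ α_M + 1)(τ_+ β + 1)) < 1. -/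
lemma mul_div_mul_one_sub_X_eq {A α α' β τ : ℝ} (hα : 0 < α) (hα' : 0 < α') (hβ : 0 < β)
    (hτ : 0 ≤ τ) (hαβ : α ≠ β) :
    A * (α / (α' + β)) * (1 - (α ^ 2 / (τ * β + 1) - β ^ 2 / (τ * α + 1)) / (α ^ 2 - β ^ 2))
      = β * (α ^ 2 * A * τ * (α * τ + β * τ + 1))
          / ((α + β) * (α' + β) * ((τ * α + 1) * (τ * β + 1))) := by
  have hsq : α ^ 2 - β ^ 2 ≠ 0 := by
    rw [sq_sub_sq]
    exact mul_ne_zero (by positivity) (sub_ne_zero.mpr hαβ)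
  have : τ * α + 1 ≠ 0 := by positivity
  have : τ * β + 1 ≠ 0 := by positivity
  field_simp
  ring

theorem recurrence_parameter_condition_iff_general
    (β αm αM Ap Am τp τm : ℝ)
    (hβ : 0 < β) (hαm : 0 < αm) (hαmM : αm ≤ αM)
    (hmβ : αm ≠ β) (hMβ : αM ≠ β)
    (hAm : Am ∈ Set.Ioc (0 : ℝ) 1)
    (hτp : 0 < τp) (hτm : 0 < τm)
    (X : ℝ → ℝ → ℝ)
    (hX : ∀ α τ : ℝ, X α τ = (α ^ 2 / (τ * β + 1) - β ^ 2 / (τ * α + 1)) / (α ^ 2 - β ^ 2)) :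
    (Ap * (αM / (αm + β)) * (1 - X αM τp) < Am * (αm / (αM + β)) * (1 - X αm τm))
      ↔
    (αM ^ 2 * Ap * τp * (αM * τp + β * τp + 1) * (τm * αm + 1) * (τm * β + 1))
        / (αm ^ 2 * Am * τm * (αm * τm + β * τm + 1) * (τp * αM + 1) * (τp * β + 1)) < 1 := by
  have hαM : 0 < αM := hαm.trans_le hαmM
  have hAm0 : 0 < Am := hAm.1
  rw [hX, hX, mul_div_mul_one_sub_X_eq hαM hαm hβ hτp.le hMβ,
    mul_div_mul_one_sub_X_eq hαm hαM hβ hτm.le hmβ, div_lt_div_iff₀ (by positivity) (by positivity),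
    div_lt_one (by positivity)]
  have hc : 0 < β * ((αm + β) * (αM + β)) := by positivity
  conv_rhs => rw [← mul_lt_mul_iff_right₀ hc]
  convert Iff.rfl using 2 <;> ring

/-- The inequality « upper bound on the averaged potentiation rate < lower bound on the
averaged depression rate » is equivalent to the paper's simple parameter condition for
positive recurrence of the weight process. -/
theorem recurrence_parameter_condition_iff
    (β αm αM Ap Am τp τm : ℝ)
    (hβ : 0 < β) (hαm : 0 < αm) (hαmM : αm ≤ αM)
    (hmβ : αm ≠ β) (hMβ : αM ≠ β)
    (hAp : Ap ∈ Set.Ioc (0 : ℝ) 1) (hAm : Am ∈ Set.Ioc (0 : ℝ) 1)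
    (hτp : 0 < τp) (hτm : 0 < τm)
    (X : ℝ → ℝ → ℝ)
    (hX : ∀ α τ : ℝ, X α τ = (α ^ 2 / (τ * β + 1) - β ^ 2 / (τ * α + 1)) / (α ^ 2 - β ^ 2)) :
    (Ap * (αM / (αm + β)) * (1 - X αM τp) < Am * (αm / (αM + β)) * (1 - X αm τm))
      ↔
    (αM ^ 2 * Ap * τp * (αM * τp + β * τp + 1) * (τm * αm + 1) * (τm * β + 1))
        / (αm ^ 2 * Am * τm * (αm * τm + β * τm + 1) * (τp * αM + 1) * (τp * β + 1)) < 1 :=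
  recurrence_parameter_condition_iff_general β αm αM Ap Am τp τm hβ hαm hαmM hmβ hMβ hAm hτp hτm X
    hX
end

section
/- Let N ≥ 1 and let w : {(i,j) : 1 ≤ i,j ≤ N, i ≠ j} → ℕ with w_{ij} ≥ 1 for all i ≠ j, and suppose max_{i≠j} w_{ij} > 1. Let r⁺, r⁻ assign to each pair (i,j), i ≠ j, reals with 0 < I_m^+ ≤ r⁺_{ij} ≤ I_M^+ and 0 < I_m^- ≤ r⁻_{ij} ≤ I_M^-, and assume I_M^+ < I_m^-. Then Σ_{i≠j} (2 w_{ij} + 1) r⁺_{ij} + Σ_{i≠j, w_{ij} > 1} (1 − 2 w_{ij}) r⁻_{ij} ≤ 2 (max_{i≠j} w_{ij}) (I_M^+ − I_m^-) + 3 N² (I_M^+ + I_M^-). -/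
open Finset

/-- Drift bound for the Lyapunov function `f(w) = Σ_{i≠j} w_{ij}²` of the averaged weight
process: the generator applied to `f` is bounded by
`2·(max_{i≠j} w_{ij})·(I_M⁺ − I_m⁻) + 3N²(I_M⁺ + I_M⁻)`. -/
theorem weight_drift_bound
    (N : ℕ) (hN : 1 ≤ N) (w : Fin N → Fin N → ℕ)
    (hw : ∀ i j, i ≠ j → 1 ≤ w i j)
    (Wmax : ℕ) (hWmax : IsGreatest {x : ℕ | ∃ i j, i ≠ j ∧ w i j = x} Wmax)
    (hWmax1 : 1 < Wmax)
    (rp rm : Fin N → Fin N → ℝ)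
    (Imp IMp Imm IMm : ℝ) (hImp : 0 < Imp) (hImm : 0 < Imm)
    (hrp : ∀ i j, i ≠ j → Imp ≤ rp i j ∧ rp i j ≤ IMp)
    (hrm : ∀ i j, i ≠ j → Imm ≤ rm i j ∧ rm i j ≤ IMm)
    (hcond : IMp < Imm) :
    (∑ i : Fin N, ∑ j : Fin N,
        if i ≠ j then (2 * (w i j : ℝ) + 1) * rp i j else 0)
      + (∑ i : Fin N, ∑ j : Fin N,
        if i ≠ j ∧ 1 < w i j then (1 - 2 * (w i j : ℝ)) * rm i j else 0)
    ≤ 2 * (Wmax : ℝ) * (IMp - Imm) + 3 * (N : ℝ) ^ 2 * (IMp + IMm) := by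
  obtain ⟨⟨i₀, j₀, hij₀, hw₀⟩, hub⟩ := hWmax
  have hIMp : 0 < IMp := lt_of_lt_of_le hImp (le_trans (hrp i₀ j₀ hij₀).1 (hrp i₀ j₀ hij₀).2)
  have hIMm : Imm ≤ IMm := le_trans (hrm i₀ j₀ hij₀).1 (hrm i₀ j₀ hij₀).2
  have hIMm0 : 0 < IMm := lt_of_lt_of_le hImm hIMm
  set g : Fin N × Fin N → ℝ := fun p =>
    (if p.1 ≠ p.2 then (2 * (w p.1 p.2 : ℝ) + 1) * rp p.1 p.2 else 0)
    + (if p.1 ≠ p.2 ∧ 1 < w p.1 p.2 then (1 - 2 * (w p.1 p.2 : ℝ)) * rm p.1 p.2 else 0)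
    with hg
  have hgle : ∀ p : Fin N × Fin N, g p ≤ 3 * (IMp + IMm) := by
    rintro ⟨i, j⟩
    simp only [hg]
    by_cases hij : i ≠ j
    · by_cases hw1 : 1 < w i j
      · simp only [hij, hw1, and_self, if_true, ne_eq, not_false_eq_true]
        have h1 : (2 * (w i j : ℝ) + 1) * rp i j ≤ (2 * (w i j : ℝ) + 1) * IMp := by
          apply mul_le_mul_of_nonneg_left (hrp i j hij).2
          positivity
        have h2 : (1 - 2 * (w i j : ℝ)) * rm i j ≤ (1 - 2 * (w i j : ℝ)) * Imm := by
          apply mul_le_mul_of_nonpos_left (hrm i j hij).1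
          have : (1 : ℝ) < (w i j : ℝ) := by exact_mod_cast hw1
          linarith
        have hwpos : (1 : ℝ) ≤ (w i j : ℝ) := by exact_mod_cast hw i j hij
        nlinarith
      · simp only [hij, hw1, and_false, if_false, ne_eq, not_false_eq_true, if_true, add_zero]
        have hweq : w i j = 1 := le_antisymm (not_lt.mp hw1) (hw i j hij)
        rw [hweq]
        have := (hrp i j hij).2
        push_cast
        nlinarith
    · simp [hij]
      positivity
  have hgmax : g (i₀, j₀) ≤ 2 * (Wmax : ℝ) * (IMp - Imm) + (IMp + Imm) := by
    simp only [hg]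
    have hw1 : 1 < w i₀ j₀ := hw₀ ▸ hWmax1
    simp only [hij₀, hw1, and_self, if_true, ne_eq, not_false_eq_true]
    rw [hw₀]
    have h1 : (2 * (Wmax : ℝ) + 1) * rp i₀ j₀ ≤ (2 * (Wmax : ℝ) + 1) * IMp := by
      apply mul_le_mul_of_nonneg_left (hrp i₀ j₀ hij₀).2
      positivity
    have h2 : (1 - 2 * (Wmax : ℝ)) * rm i₀ j₀ ≤ (1 - 2 * (Wmax : ℝ)) * Imm := by
      apply mul_le_mul_of_nonpos_left (hrm i₀ j₀ hij₀).1
      have : (1 : ℝ) < (Wmax : ℝ) := by exact_mod_cast hWmax1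
      linarith
    nlinarith
  have hLHS : (∑ i : Fin N, ∑ j : Fin N,
        if i ≠ j then (2 * (w i j : ℝ) + 1) * rp i j else 0)
      + (∑ i : Fin N, ∑ j : Fin N,
        if i ≠ j ∧ 1 < w i j then (1 - 2 * (w i j : ℝ)) * rm i j else 0)
      = ∑ p : Fin N × Fin N, g p := by
    rw [Fintype.sum_prod_type]
    rw [← Finset.sum_add_distrib]
    congr 1; ext i
    rw [← Finset.sum_add_distrib]
  rw [hLHS]
  have hmem : (i₀, j₀) ∈ (univ : Finset (Fin N × Fin N)) := mem_univ _
  rw [← Finset.sum_erase_add _ _ hmem]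
  have hrest : ∑ p ∈ (univ : Finset (Fin N × Fin N)).erase (i₀, j₀), g p
      ≤ ((N * N - 1 : ℕ) : ℝ) * (3 * (IMp + IMm)) := by
    calc ∑ p ∈ (univ : Finset (Fin N × Fin N)).erase (i₀, j₀), g p
        ≤ ∑ p ∈ (univ : Finset (Fin N × Fin N)).erase (i₀, j₀), 3 * (IMp + IMm) :=
          Finset.sum_le_sum (fun p _ => hgle p)
      _ = ((univ : Finset (Fin N × Fin N)).erase (i₀, j₀)).card * (3 * (IMp + IMm)) := by
          rw [Finset.sum_const, nsmul_eq_mul]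
      _ = ((N * N - 1 : ℕ) : ℝ) * (3 * (IMp + IMm)) := by
          rw [Finset.card_erase_of_mem hmem]
          simp [Fintype.card_prod]
  have hN2 : 1 ≤ N * N := Nat.one_le_iff_ne_zero.mpr (by positivity)
  have hcast : ((N * N - 1 : ℕ) : ℝ) = (N : ℝ) ^ 2 - 1 := by
    push_cast [Nat.cast_sub hN2]
    ring
  rw [hcast] at hrest
  nlinarith [hrest, hgmax, hIMp, hIMm0, hIMm, hImm]
end

section
/- Let a₁ := α_{00}^{01} > 0, a₂ := α_{00}^{10} > 0, b₁ := α_{01}^{11} > 0, b₂ := α_{10}^{11} > 0 and β > 0, and let μ₁, μ₂, μ₃, μ₄ > 0 satisfy the balance equations (a₁ + a₂) μ₁ = β μ₂ + β μ₃, (b₁ + β) μ₂ = a₁ μ₁ + β μ₄, (b₂ + β) μ₃ = a₂ μ₁ + β μ₄, and 2β μ₄ = b₁ μ₂ + b₂ μ₃. Then for every λ₁ > 0 the 4×4 real matrix M₁(λ₁) = [[−a₂ − a₁ − λ₁, β μ₂/μ₁, β μ₃/μ₁, 0], [a₁ μ₁/μ₂, −b₁ − β − λ₁, 0, β μ₄/μ₂],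 [0, 0, −b₂ − β − λ₁, β μ₄/μ₃], [0, 0, b₂ μ₃/μ₄, −2β − λ₁]] is invertible. -/
/-!
The off-diagonal entries of `M₁(λ₁)` are nonnegative, and the balance equations, divided by `μₖ`,
say that its row sums are `-λ₁, -λ₁, -λ₁ - a₂ μ₁ / μ₃, -λ₁ - b₁ μ₂ / μ₄`, all negative.
A matrix with nonnegative off-diagonal entries and negative row sums is strictly diagonally
dominant by rows, hence invertible by Gershgorin's theorem.
-/

open Finset

theorem Matrix.isUnit_of_offDiag_nonneg_of_sum_row_neg {n : Type*} [Fintype n] [DecidableEq n]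
    (A : Matrix n n ℝ) (hoff : ∀ i j, i ≠ j → 0 ≤ A i j) (hrow : ∀ i, ∑ j, A i j < 0) :
    IsUnit A := by
  refine (A.isUnit_iff_isUnit_det).2 (isUnit_iff_ne_zero.2 (det_ne_zero_of_sum_row_lt_diag ?_))
  intro i
  have hsplit : ∑ j ∈ univ.erase i, A i j + A i i = ∑ j, A i j :=
    sum_erase_add _ _ (mem_univ i)
  have hoff_nonneg : 0 ≤ ∑ j ∈ univ.erase i, A i j :=
    sum_nonneg fun j hj => hoff i j (ne_of_mem_erase hj).symm
  have habs : ∑ j ∈ univ.erase i, ‖A i j‖ = ∑ j ∈ univ.erase i, A i j :=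
    sum_congr rfl fun j hj => Real.norm_of_nonneg (hoff i j (ne_of_mem_erase hj).symm)
  rw [habs, Real.norm_of_nonpos (by linarith [hrow i])]
  linarith [hrow i]

/-- Invertibility of the matrix `M₁(λ₁)` of the linear system satisfied by the partial
Laplace transforms of the invariant measure of the two-neuron process, for every `λ₁ > 0`,
given that `(μ₁,μ₂,μ₃,μ₄)` satisfies the balance equations of the jump chain. -/
theorem laplace_system_matrix_invertible
    (a₁ a₂ b₁ b₂ β : ℝ)
    (ha₁ : 0 < a₁) (ha₂ : 0 < a₂) (hb₁ : 0 < b₁) (hb₂ : 0 < b₂) (hβ : 0 < β)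
    (μ₁ μ₂ μ₃ μ₄ : ℝ)
    (hμ₁ : 0 < μ₁) (hμ₂ : 0 < μ₂) (hμ₃ : 0 < μ₃) (hμ₄ : 0 < μ₄)
    (hbal₁ : (a₁ + a₂) * μ₁ = β * μ₂ + β * μ₃)
    (hbal₂ : (b₁ + β) * μ₂ = a₁ * μ₁ + β * μ₄)
    (hbal₃ : (b₂ + β) * μ₃ = a₂ * μ₁ + β * μ₄)
    (hbal₄ : 2 * β * μ₄ = b₁ * μ₂ + b₂ * μ₃) :
    ∀ lam₁ : ℝ, 0 < lam₁ →
      IsUnit (!![-a₂ - a₁ - lam₁, β * μ₂ / μ₁, β * μ₃ / μ₁, 0;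
                 a₁ * μ₁ / μ₂, -b₁ - β - lam₁, 0, β * μ₄ / μ₂;
                 0, 0, -b₂ - β - lam₁, β * μ₄ / μ₃;
                 0, 0, b₂ * μ₃ / μ₄, -2 * β - lam₁] : Matrix (Fin 4) (Fin 4) ℝ) := by
  intro lam₁ hlam₁
  have hrow₁ : β * μ₂ / μ₁ + β * μ₃ / μ₁ = a₁ + a₂ := by
    field_simp; linarith
  have hrow₂ : a₁ * μ₁ / μ₂ + β * μ₄ / μ₂ = b₁ + β := by
    field_simp; linarith
  have hrow₃ : β * μ₄ / μ₃ + a₂ * μ₁ / μ₃ = b₂ + β := by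
    field_simp; linarith
  have hrow₄ : b₂ * μ₃ / μ₄ + b₁ * μ₂ / μ₄ = 2 * β := by
    field_simp; linarith
  have hleak₃ : 0 < a₂ * μ₁ / μ₃ := by positivity
  have hleak₄ : 0 < b₁ * μ₂ / μ₄ := by positivity
  apply Matrix.isUnit_of_offDiag_nonneg_of_sum_row_neg
  · intro i j hij
    fin_cases i <;> fin_cases j <;> simp at hij ⊢ <;> positivity
  · intro i
    fin_cases i <;> simp [Fin.sum_univ_four] <;> linarith
end

section
/- Fix u ≥ 0 and β > 0, and define F(α) := (α² e^{−βu} − β² e^{−αu})/(α² − β²) for α > 0 with α ≠ β. Then F is nonincreasing on (0,β) ∪ (β,∞): for all 0 < α_m ≤ α_M with α_m ≠ β and α_M ≠ β one has (α_M² e^{−βu} − β² e^{−α_M u})/(α_M² − β²) ≤ (α_m² e^{−βu} − β² e^{−α_m u})/(α_m² − β²). -/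
lemma convexOn_exp_neg_mul (u : ℝ) : ConvexOn ℝ Set.univ (fun x : ℝ => Real.exp (-(u * x))) := by
  have h := convexOn_exp
  constructor
  · exact convex_univ
  · intro x _ y _ a b ha hb hab
    have hthis := h.2 (Set.mem_univ (-(u*x))) (Set.mem_univ (-(u*y))) ha hb hab
    simp only [smul_eq_mul] at hthis ⊢
    have e : -(u * (a * x + b * y)) = a * -(u * x) + b * -(u * y) := by ring
    rw [e]
    exact hthis

/-- g(α) = (e^{-βu} - e^{-αu})/(α - β) is nonincreasing in α. -/
lemma g_anti (u β : ℝ) (hu : 0 ≤ u) {a b : ℝ} (hab : a ≤ b) (haβ : a ≠ β) (hbβ : b ≠ β) :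
    (Real.exp (-(β * u)) - Real.exp (-(b * u))) / (b - β)
      ≤ (Real.exp (-(β * u)) - Real.exp (-(a * u))) / (a - β) := by
  have hconv := convexOn_exp_neg_mul u
  have hs := hconv.secant_mono (Set.mem_univ β) (Set.mem_univ a) (Set.mem_univ b) haβ hbβ hab
  have e1 : ∀ x : ℝ, -(u * x) = -(x * u) := fun x => by ring
  simp only [e1] at hs
  have h1 : (Real.exp (-(β * u)) - Real.exp (-(b * u))) / (b - β)
      = -((Real.exp (-(b * u)) - Real.exp (-(β * u))) / (b - β)) := by ring
  have h2 : (Real.exp (-(β * u)) - Real.exp (-(a * u))) / (a - β)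
      = -((Real.exp (-(a * u)) - Real.exp (-(β * u))) / (a - β)) := by ring
  rw [h1, h2]
  exact neg_le_neg hs

lemma g_nonneg (u β : ℝ) (hu : 0 ≤ u) {a : ℝ} (haβ : a ≠ β) :
    0 ≤ (Real.exp (-(β * u)) - Real.exp (-(a * u))) / (a - β) := by
  rw [div_nonneg_iff]
  rcases lt_or_gt_of_ne haβ with h | h
  · right
    constructor
    · have : -(β * u) ≤ -(a * u) := by nlinarith
      have := Real.exp_le_exp.2 this
      linarith
    · linarith
  · left
    constructor
    · have : -(a * u) ≤ -(β * u) := by nlinarith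
      have := Real.exp_le_exp.2 this
      linarith
    · linarith

/-- Monotonicity of the stationary tail probability of the age variable in the on-rate:
for fixed `u ≥ 0` and `β > 0`, the function `F(α) = (α²e^{−βu} − β²e^{−αu})/(α² − β²)` is
nonincreasing, i.e. for `0 < α_m ≤ α_M` (both different from `β`),
`F(α_M) ≤ F(α_m)`. -/
theorem tail_probability_antitone_in_rate
    (u β : ℝ) (hu : 0 ≤ u) (hβ : 0 < β)
    (αm αM : ℝ) (hαm : 0 < αm) (hle : αm ≤ αM) (hmβ : αm ≠ β) (hMβ : αM ≠ β) :
    (αM ^ 2 * Real.exp (-(β * u)) - β ^ 2 * Real.exp (-(αM * u))) / (αM ^ 2 - β ^ 2)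
      ≤ (αm ^ 2 * Real.exp (-(β * u)) - β ^ 2 * Real.exp (-(αm * u))) / (αm ^ 2 - β ^ 2) := by
  have hαM : 0 < αM := lt_of_lt_of_le hαm hle
  have hm2 : αm ^ 2 - β ^ 2 ≠ 0 := by
    intro h; exact hmβ (by nlinarith)
  have hM2 : αM ^ 2 - β ^ 2 ≠ 0 := by
    intro h; exact hMβ (by nlinarith)
  have hmd : αm - β ≠ 0 := sub_ne_zero.2 hmβ
  have hMd : αM - β ≠ 0 := sub_ne_zero.2 hMβ
  have hmp : (0:ℝ) < αm + β := by linarith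
  have hMp : (0:ℝ) < αM + β := by linarith
  set gm := (Real.exp (-(β * u)) - Real.exp (-(αm * u))) / (αm - β) with hgm
  set gM := (Real.exp (-(β * u)) - Real.exp (-(αM * u))) / (αM - β) with hgM
  have hgMn : 0 ≤ gM := g_nonneg u β hu hMβ
  have hganti : gM ≤ gm := g_anti u β hu hle hmβ hMβ
  have keyM : (αM ^ 2 * Real.exp (-(β * u)) - β ^ 2 * Real.exp (-(αM * u))) / (αM ^ 2 - β ^ 2)
      = Real.exp (-(β * u)) + β ^ 2 * (gM / (αM + β)) := by
    rw [hgM]; field_simp; ring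
  have keym : (αm ^ 2 * Real.exp (-(β * u)) - β ^ 2 * Real.exp (-(αm * u))) / (αm ^ 2 - β ^ 2)
      = Real.exp (-(β * u)) + β ^ 2 * (gm / (αm + β)) := by
    rw [hgm]; field_simp; ring
  rw [keyM, keym]
  have h1 : gM / (αM + β) ≤ gM / (αm + β) := by gcongr
  have h2 : gM / (αm + β) ≤ gm / (αm + β) := by gcongr
  nlinarith [sq_nonneg β]
end
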